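/- arXiv:math/0612508 — 2 statements merged into one kernel-verified Lean document; each statement's English description precedes it below -/
import Mathlib

section
/- For every positive integer n with n ≠ 6, every automorphism of the symmetric group S_n is inner, i.e. the conjugation homomorphism S_n → Aut(S_n) sending g to conjugation by g is surjective; if moreover n ≠ 2, this homomorphism is also injective, so Aut(S_n) ≅ S_n. -/
/-!
An automorphism `φ` of `Perm α` preserves orders and conjugacy classes, so it sends the class
of a transposition `t` to the class of an involution of cycle type `2^m` in which, as for
transpositions, the product of any two members has order dividing `6`, and (once `|α| ≥ 3`)
some product has order `3`. For `m ≥ 2` this is impossible unless `|α| = 6`: if the involution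
has a fixed point, two conjugates multiply to a `5`-cycle; if it has no fixed point and `m ≥ 4`,
two conjugates multiply to an element of order `4`; and for `|α| = 4` the involutions of type
`(2,2)` lie in the Klein four-group, where every product has order at most `2`.

So `φ` maps transpositions to transpositions. The images of the transpositions `(z i)` pairwise
fail to commute, hence pairwise share a point, and they cannot form a triangle because
`(z i)(z j)(z i) = (i j) ≠ (z k)`; so they all contain a common point `b`, and `φ` is
conjugation by the permutation sending `z` to `b` and `i` to the other point of `φ (z i)`.
-/

open Equiv Equiv.Perm

section ConjugateProducts

variable {G H : Type*} [Group G] [Group H]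

def MulConjPowEqOne (k : ℕ) (g : G) : Prop :=
  ∀ h : G, IsConj g h → (g * h) ^ k = 1

theorem MulConjPowEqOne.map {k : ℕ} {g : G} (hg : MulConjPowEqOne k g) (φ : G ≃* H) :
    MulConjPowEqOne k (φ g) := by
  intro h hgh
  have : IsConj g (φ.symm h) := by simpa using (φ.symm : H →* G).map_isConj hgh
  simpa using congrArg φ (hg _ this)

theorem MulEquiv.mulConjPowEqOne_iff {k : ℕ} {g : G} (φ : G ≃* H) :
    MulConjPowEqOne k (φ g) ↔ MulConjPowEqOne k g :=
  ⟨fun h => by simpa using h.map φ.symm, fun h => h.map φ⟩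

end ConjugateProducts

namespace Equiv.Perm

variable {α : Type*} [DecidableEq α] [Fintype α]

omit [Fintype α] in
theorem swap_pow_six (x y : α) : swap x y ^ 6 = 1 := by
  rw [show 6 = 2 * 3 from rfl, pow_mul, sq, swap_mul_self, one_pow]

theorem swap_mul_swap_same_pow_six (x y z : α) : (swap x y * swap x z) ^ 6 = 1 := by
  rcases eq_or_ne x y with rfl | hxy
  · rw [swap_self, ← one_def, one_mul, swap_pow_six]
  rcases eq_or_ne x z with rfl | hxz
  · rw [swap_self, ← one_def, mul_one, swap_pow_six]
  rcases eq_or_ne y z with rfl | hyz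
  · rw [swap_mul_self, one_pow]
  rw [← orderOf_dvd_iff_pow_eq_one, (isThreeCycle_swap_mul_swap_same hxy hxz hyz).orderOf]
  norm_num

theorem IsSwap.mul_pow_six {s t : Perm α} (hs : s.IsSwap) (ht : t.IsSwap) :
    (s * t) ^ 6 = 1 := by
  obtain ⟨a, b, hab, rfl⟩ := hs
  obtain ⟨c, d, hcd, rfl⟩ := ht
  by_cases hac : a = c
  · subst hac; exact swap_mul_swap_same_pow_six a b d
  by_cases had : a = d
  · subst had; rw [swap_comm c a]; exact swap_mul_swap_same_pow_six a b c
  by_cases hbc : b = c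
  · subst hbc; rw [swap_comm a b]; exact swap_mul_swap_same_pow_six b a d
  by_cases hbd : b = d
  · subst hbd; rw [swap_comm a b, swap_comm c b]; exact swap_mul_swap_same_pow_six b a c
  have hdisj : Disjoint (swap a b) (swap c d) := disjoint_swap_swap (by simp [*])
  rw [hdisj.commute.mul_pow, swap_pow_six, swap_pow_six, one_mul]

theorem mulConjPowEqOne_six_of_isSwap {t : Perm α} (ht : t.IsSwap) : MulConjPowEqOne 6 t :=
  fun _ hth => ht.mul_pow_six <| isSwap_iff_cycleType.2 <|
    (isConj_iff_cycleType_eq.1 hth) ▸ isSwap_iff_cycleType.1 ht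

theorem not_mulConjPowEqOne_two_of_isSwap {t : Perm α} (ht : t.IsSwap)
    (hα : 3 ≤ Fintype.card α) : ¬ MulConjPowEqOne 2 t := by
  obtain ⟨a, b, hab, rfl⟩ := ht
  obtain ⟨c, -, hc⟩ := Finset.exists_mem_notMem_of_card_lt_card (s := {a, b})
    (t := Finset.univ) (Finset.card_le_two.trans_lt (by rw [Finset.card_univ]; omega))
  simp only [Finset.mem_insert, Finset.mem_singleton, not_or] at hc
  intro H
  have hpow := orderOf_dvd_of_pow_eq_one (H _ (isConj_swap hab (Ne.symm hc.1)))
  rw [(isThreeCycle_swap_mul_swap_same hab (Ne.symm hc.1) (Ne.symm hc.2)).orderOf] at hpow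
  norm_num at hpow

theorem mulConjPowEqOne_two_of_card_eq_four (hα : Nat.card α = 4) {g : Perm α}
    (hg : g.cycleType = {2, 2}) : MulConjPowEqOne 2 g := by
  intro h hgh
  have hh : h.cycleType = {2, 2} := (isConj_iff_cycleType_eq.1 hgh) ▸ hg
  have hmem : ∀ {k : Perm α} (hk : k.cycleType = {2, 2}), k ∈ alternatingGroup α := by
    intro k hk
    rw [mem_alternatingGroup, sign_of_cycleType, hk]
    rfl
  let K := alternatingGroup.kleinFour α
  have hK : ∀ {k : Perm α} (hk : k.cycleType = {2, 2}), (⟨k, hmem hk⟩ : alternatingGroup α) ∈ K :=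
    fun hk => Subgroup.subset_closure hk
  have := Monoid.pow_exponent_eq_one ((⟨_, hK hg⟩ : K) * ⟨_, hK hh⟩)
  rw [alternatingGroup.exponent_kleinFour_of_card_eq_four hα] at this
  simpa using congrArg (fun x : K => ((x : alternatingGroup α) : Perm α)) this

omit [Fintype α] in
theorem not_mulConjPowEqOne_six_of_fixedPoint {g : Perm α} {x y : Fin 2 → α}
    (hx : Function.Injective x) (hxy : ∀ i j, x i ≠ y j)
    (hgx : ∀ i, g (x i) = y i) (hgy : ∀ i, g (y i) = x i) {w : α} (hw : g w = w) :
    ¬ MulConjPowEqOne 6 g := by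
  have hwx : ∀ i, w ≠ x i := fun i h => hxy i i (by rw [← hgx, ← h, hw])
  have hwy : ∀ i, w ≠ y i := fun i h => hxy i i (by rw [← hgy, ← h, hw])
  intro H
  -- conjugating by the 3-cycle `π` makes `g * (π * g * π⁻¹)` the 5-cycle `(x₀ y₀ y₁ w x₁)`
  set π := swap (x 0) (x 1) * swap (x 1) w
  have key : ((g * (π * g * π⁻¹)) ^ 6) (x 0) = y 0 := by
    simp [π, pow_succ, mul_apply, swap_apply_def, hx.eq_iff, (hxy _ _).symm, hwx, (hwx _).symm,
      (hwy _).symm, hgx, hgy, hw]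
  rw [H _ (isConj_iff.2 ⟨π, rfl⟩), one_apply] at key
  exact hxy 0 0 key

omit [Fintype α] in
theorem not_mulConjPowEqOne_six_of_four_pairs {g : Perm α} {x y : Fin 4 → α}
    (hx : Function.Injective x) (hxy : ∀ i j, x i ≠ y j)
    (hgx : ∀ i, g (x i) = y i) (hgy : ∀ i, g (y i) = x i) : ¬ MulConjPowEqOne 6 g := by
  intro H
  -- conjugating by the 4-cycle `π = (x₀ x₁ x₂ x₃)` makes `g * (π * g * π⁻¹)` act on the `xᵢ`
  -- as the 4-cycle `(x₀ x₃ x₂ x₁)`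
  set π := swap (x 0) (x 1) * swap (x 1) (x 2) * swap (x 2) (x 3)
  have key : ((g * (π * g * π⁻¹)) ^ 6) (x 0) = x 2 := by
    simp [π, pow_succ, mul_apply, swap_apply_def, hx.eq_iff, (hxy _ _).symm, hgx, hgy]
  rw [H _ (isConj_iff.2 ⟨π, rfl⟩), one_apply, hx.eq_iff] at key
  exact absurd key (by decide)

theorem exists_pairs_of_cycleType_eq_replicate_two {g : Perm α} {m k : ℕ}
    (hg : g.cycleType = Multiset.replicate m 2) (hk : k ≤ m) :
    ∃ x y : Fin k → α, Function.Injective x ∧ (∀ i j, x i ≠ y j) ∧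
      (∀ i, g (x i) = y i) ∧ ∀ i, g (y i) = x i := by
  have hcard : Multiset.card g.cycleType = g.cycleFactorsFinset.card := by
    rw [cycleType_def, Multiset.card_map]; rfl
  rw [hg, Multiset.card_replicate] at hcard
  let e : Fin k ↪ g.cycleFactorsFinset :=
    (Fin.castLEEmb (hcard ▸ hk)).trans g.cycleFactorsFinset.equivFin.symm.toEmbedding
  have hswap : ∀ i, (e i : Perm α).IsSwap := fun i => by
    rw [← card_support_eq_two]
    have : (e i : Perm α).support.card ∈ g.cycleType :=
      Multiset.mem_map_of_mem (Finset.card ∘ support) (e i).2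
    rw [hg] at this
    exact Multiset.eq_of_mem_replicate this
  choose x y hxy he using hswap
  have hmem : ∀ i, x i ∈ (e i : Perm α).support ∧ y i ∈ (e i : Perm α).support := fun i => by
    simp [he i, support_swap (hxy i)]
  have hfactor : ∀ i, ∀ p ∈ (e i : Perm α).support, (e i : Perm α) p = g p :=
    fun i => (mem_cycleFactorsFinset_iff.1 (e i).2).2
  have hsame : ∀ i j p, p ∈ (e i : Perm α).support → p ∈ (e j : Perm α).support → i = j := by
    intro i j p hi hj
    by_contra hne
    have hdisj := cycleFactorsFinset_pairwise_disjoint g (e i).2 (e j).2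
      (fun h => hne (e.injective (Subtype.ext h)))
    exact Finset.disjoint_left.1 hdisj.disjoint_support hi hj
  refine ⟨x, y, fun i j h => hsame i j _ (hmem i).1 (h ▸ (hmem j).1), fun i j h => ?_,
    fun i => ?_, fun i => ?_⟩
  · obtain rfl := hsame i j _ (hmem i).1 (h ▸ (hmem j).2)
    exact hxy i h
  · rw [← hfactor i _ (hmem i).1, he i, swap_apply_left]
  · rw [← hfactor i _ (hmem i).2, he i, swap_apply_right]

theorem not_mulConjPowEqOne_six_of_cycleType {g : Perm α} {m : ℕ}
    (hg : g.cycleType = Multiset.replicate m 2) (hm : 2 ≤ m)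
    (hmα : 2 * m < Fintype.card α ∨ 4 ≤ m) : ¬ MulConjPowEqOne 6 g := by
  rcases hmα with hlt | hm4
  · obtain ⟨x, y, hx, hxy, hgx, hgy⟩ := exists_pairs_of_cycleType_eq_replicate_two hg hm
    have hsupp : g.support.card < (Finset.univ : Finset α).card := by
      rw [← sum_cycleType, hg, Multiset.sum_replicate, smul_eq_mul, Finset.card_univ]
      omega
    obtain ⟨w, -, hw⟩ := Finset.exists_mem_notMem_of_card_lt_card hsupp
    exact not_mulConjPowEqOne_six_of_fixedPoint hx hxy hgx hgy (notMem_support.1 hw)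
  · obtain ⟨x, y, hx, hxy, hgx, hgy⟩ := exists_pairs_of_cycleType_eq_replicate_two hg hm4
    exact not_mulConjPowEqOne_six_of_four_pairs hx hxy hgx hgy

theorem IsSwap.mulAut_apply (h6 : Fintype.card α ≠ 6) (φ : MulAut (Perm α)) {t : Perm α}
    (ht : t.IsSwap) : (φ t).IsSwap := by
  have hord : _root_.orderOf (φ t) = 2 := by rw [MulEquiv.orderOf_eq, ht.orderOf]
  obtain ⟨k, hk⟩ := cycleType_prime_order (hord ▸ Nat.prime_two)
  rw [hord] at hk
  have hkα : 2 * (k + 1) ≤ Fintype.card α := by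
    have := sum_cycleType_le (φ t)
    rwa [hk, Multiset.sum_replicate, smul_eq_mul, mul_comm] at this
  have hφt : MulConjPowEqOne 6 (φ t) := φ.mulConjPowEqOne_iff.2 (mulConjPowEqOne_six_of_isSwap ht)
  rcases Nat.eq_zero_or_pos k with rfl | hk0
  · rw [isSwap_iff_cycleType, hk]; rfl
  by_cases h4 : Fintype.card α = 4 ∧ k = 1
  · obtain ⟨h4, rfl⟩ := h4
    have := mulConjPowEqOne_two_of_card_eq_four (by rwa [Nat.card_eq_fintype_card]) hk
    exact absurd (φ.mulConjPowEqOne_iff.1 this) (not_mulConjPowEqOne_two_of_isSwap ht (by omega))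
  · exact absurd hφt (not_mulConjPowEqOne_six_of_cycleType hk (by omega) (by omega))

theorem exists_mem_support_of_not_commute {f g : Perm α} (h : ¬Commute f g) :
    ∃ p, p ∈ f.support ∧ p ∈ g.support := by
  by_contra! hfg
  exact h (disjoint_iff_disjoint_support.2 (Finset.disjoint_left.2 hfg)).commute

theorem IsSwap.eq_swap_of_mem_support {s : Perm α} (hs : s.IsSwap) {p : α}
    (hp : p ∈ s.support) : s = swap p (s p) := by
  obtain ⟨a, b, hab, rfl⟩ := hs
  rcases (swap_apply_ne_self_iff.1 (mem_support.1 hp)).2 with rfl | rfl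
  · rw [swap_apply_left]
  · rw [swap_apply_right, swap_comm]

theorem exists_forall_mem_support_of_isSwap {ι : Type*} [Nonempty ι] {s : ι → Perm α}
    (hs : ∀ i, (s i).IsSwap) (hcomm : ∀ i j, i ≠ j → ¬Commute (s i) (s j))
    (hconj : ∀ i j k, i ≠ j → i ≠ k → j ≠ k → s i * s j * s i ≠ s k) :
    ∃ b, ∀ i, b ∈ (s i).support := by
  have hmem : ∀ {a b p : α}, p ∈ (swap a b).support → p = a ∨ p = b :=
    fun hp => (swap_apply_ne_self_iff.1 (mem_support.1 hp)).2
  obtain ⟨o⟩ := ‹Nonempty ι›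
  obtain ⟨x, y, hxy, hso⟩ := hs o
  have hmeet : ∀ i, x ∈ (s i).support ∨ y ∈ (s i).support := by
    intro i
    rcases eq_or_ne i o with rfl | hio
    · simp [hso, support_swap hxy]
    obtain ⟨p, hpo, hpi⟩ := exists_mem_support_of_not_commute (hcomm o i hio.symm)
    rw [hso] at hpo
    rcases hmem hpo with rfl | rfl
    exacts [Or.inl hpi, Or.inr hpi]
  by_contra! hnone
  obtain ⟨i, hxi⟩ := hnone x
  obtain ⟨j, hyj⟩ := hnone y
  have hyi : y ∈ (s i).support := (hmeet i).resolve_left hxi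
  have hxj : x ∈ (s j).support := (hmeet j).resolve_right hyj
  have hsi := (hs i).eq_swap_of_mem_support hyi
  have hsj := (hs j).eq_swap_of_mem_support hxj
  have hix : s i y ≠ x := fun h => hxi (h ▸ apply_mem_support.2 hyi)
  have hjy : s j x ≠ y := fun h => hyj (h ▸ apply_mem_support.2 hxj)
  have hij : i ≠ j := by rintro rfl; exact hyj hyi
  have hio : i ≠ o := by rintro rfl; exact hxi (by simp [hso, support_swap hxy])
  have hjo : j ≠ o := by rintro rfl; exact hyj (by simp [hso, support_swap hxy])
  have hu : s i y = s j x := by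
    obtain ⟨p, hpi, hpj⟩ := exists_mem_support_of_not_commute (hcomm i j hij)
    rw [hsi] at hpi
    rw [hsj] at hpj
    rcases hmem hpi with rfl | rfl <;> rcases hmem hpj with h | h
    exacts [absurd h.symm hxy, absurd h.symm hjy, absurd h hix, h]
  apply hconj i o j hio hij hjo.symm
  rw [hso, hsi, hsj, ← hu, swap_mul_swap_mul_swap hxy (fun h => hix h.symm), swap_comm]

theorem closure_range_swap (z : α) : Subgroup.closure (Set.range (swap z)) = ⊤ := by
  rw [eq_top_iff, ← closure_isSwap, Subgroup.closure_le]
  rintro _ ⟨i, j, hij, rfl⟩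
  have hmem : ∀ k, swap z k ∈ Subgroup.closure (Set.range (swap z)) :=
    fun k => Subgroup.subset_closure ⟨k, rfl⟩
  rcases eq_or_ne j z with rfl | hjz
  · rw [swap_comm]; exact hmem i
  · rw [← swap_mul_swap_mul_swap hjz hij.symm, swap_comm j z]
    exact mul_mem (mul_mem (hmem i) (hmem j)) (hmem i)

theorem exists_forall_mem_support_mulAut_swap (φ : MulAut (Perm α))
    (hφ : ∀ t : Perm α, t.IsSwap → (φ t).IsSwap) {z o : α} (hzo : z ≠ o) :
    ∃ b, ∀ i, i ≠ z → b ∈ (φ (swap z i)).support := by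
  have : Nonempty {i // i ≠ z} := ⟨⟨o, hzo.symm⟩⟩
  have hcomm : ∀ i j : {i // i ≠ z}, i ≠ j → ¬Commute (φ (swap z i)) (φ (swap z j)) := by
    intro i j hij h
    have hij : (i : α) ≠ j := fun h => hij (Subtype.ext h)
    have := congrArg (· z) (h.map φ.symm).eq
    simp [swap_apply_of_ne_of_ne i.2 hij, swap_apply_of_ne_of_ne j.2 hij.symm] at this
    exact hij this.symm
  have hconj : ∀ i j k : {i // i ≠ z}, i ≠ j → i ≠ k → j ≠ k →
      φ (swap z i) * φ (swap z j) * φ (swap z i) ≠ φ (swap z k) := by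
    intro i j k hij _ _
    have hij : (i : α) ≠ j := fun h => hij (Subtype.ext h)
    rw [← map_mul, ← map_mul, swap_comm z j, swap_mul_swap_mul_swap j.2 hij.symm, ne_eq,
      EmbeddingLike.apply_eq_iff_eq]
    intro h
    have := congrArg (· z) h
    simp [swap_apply_of_ne_of_ne i.2.symm j.2.symm] at this
    exact k.2 this.symm
  obtain ⟨b, hb⟩ := exists_forall_mem_support_of_isSwap
    (s := fun i : {i // i ≠ z} => φ (swap z i)) (fun i => hφ _ ⟨z, i, i.2.symm, rfl⟩) hcomm hconj
  exact ⟨b, fun i hi => hb ⟨i, hi⟩⟩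

theorem exists_conj_eq_of_isSwap_map (φ : MulAut (Perm α))
    (hφ : ∀ t : Perm α, t.IsSwap → (φ t).IsSwap) : ∃ σ : Perm α, MulAut.conj σ = φ := by
  rcases subsingleton_or_nontrivial α with hα | hα
  · exact ⟨1, MulEquiv.ext fun _ => Subsingleton.elim _ _⟩
  obtain ⟨z, o, hzo⟩ := exists_pair_ne α
  obtain ⟨b, hb⟩ := exists_forall_mem_support_mulAut_swap φ hφ hzo
  let f : α → α := fun i => if i = z then b else φ (swap z i) b
  have hf : ∀ i, φ (swap z i) = swap (f z) (f i) := by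
    intro i
    rcases eq_or_ne i z with rfl | hi
    · rw [swap_self, swap_self, ← one_def, map_one]
    · simpa [f, hi] using (hφ _ ⟨z, i, hi.symm, rfl⟩).eq_swap_of_mem_support (hb i hi)
  have hinj : Function.Injective f := fun i j hij =>
    swap_injective_of_left z (φ.injective (by simp only [hf, hij]))
  let σ := Equiv.ofBijective f hinj.bijective_of_finite
  refine ⟨σ, MulEquiv.toMonoidHom_injective
    (MonoidHom.eq_of_eqOn_dense (closure_range_swap z) ?_)⟩
  rintro _ ⟨i, rfl⟩
  change MulAut.conj σ (swap z i) = φ (swap z i)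
  rw [hf i, MulAut.conj_apply, ← swap_apply_apply]
  rfl

theorem mulAut_conj_surjective (h6 : Fintype.card α ≠ 6) :
    Function.Surjective (MulAut.conj : Perm α →* MulAut (Perm α)) :=
  fun φ => exists_conj_eq_of_isSwap_map φ fun _ ht => ht.mulAut_apply h6 φ

theorem mulAut_conj_injective (h2 : Fintype.card α ≠ 2) :
    Function.Injective (MulAut.conj : Perm α →* MulAut (Perm α)) := by
  rw [injective_iff_map_eq_one]
  intro c hc
  ext p
  rw [one_apply]
  by_contra hp
  have hcard : ({p, c p} : Finset α).card < (Finset.univ : Finset α).card := by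
    have := Finset.card_le_univ ({p, c p} : Finset α)
    rw [Finset.card_pair (Ne.symm hp)] at this ⊢
    rw [Finset.card_univ]
    omega
  obtain ⟨q, -, hq⟩ := Finset.exists_mem_notMem_of_card_lt_card hcard
  simp only [Finset.mem_insert, Finset.mem_singleton, not_or] at hq
  have := congrArg (fun ψ : MulAut (Perm α) => ψ (swap p q) (c p)) hc
  simp [← swap_apply_apply, swap_apply_of_ne_of_ne hp (Ne.symm hq.2)] at this
  exact hq.1 this

end Equiv.Perm

theorem aut_symmetricGroup_eq_inn_general (n : ℕ) (h6 : n ≠ 6) :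
    Function.Surjective
      (MulAut.conj : Equiv.Perm (Fin n) →* MulAut (Equiv.Perm (Fin n))) ∧
    (n ≠ 2 →
      Function.Injective
        (MulAut.conj : Equiv.Perm (Fin n) →* MulAut (Equiv.Perm (Fin n))) ∧
      Nonempty (MulAut (Equiv.Perm (Fin n)) ≃* Equiv.Perm (Fin n))) := by
  have hsurj := mulAut_conj_surjective (α := Fin n) (by simpa using h6)
  refine ⟨hsurj, fun h2 => ?_⟩
  have hinj := mulAut_conj_injective (α := Fin n) (by simpa using h2)
  exact ⟨hinj, ⟨(MulEquiv.ofBijective _ ⟨hinj, hsurj⟩).symm⟩⟩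

/-- For every positive integer `n` with `n ≠ 6`, every automorphism of the symmetric
group `S_n` is inner, i.e. the conjugation homomorphism `S_n → Aut (S_n)` is surjective;
if moreover `n ≠ 2`, it is also injective, so `Aut (S_n) ≅ S_n`. -/
theorem aut_symmetricGroup_eq_inn (n : ℕ) (hn : 0 < n) (h6 : n ≠ 6) :
    Function.Surjective
      (MulAut.conj : Equiv.Perm (Fin n) →* MulAut (Equiv.Perm (Fin n))) ∧
    (n ≠ 2 →
      Function.Injective
        (MulAut.conj : Equiv.Perm (Fin n) →* MulAut (Equiv.Perm (Fin n))) ∧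
      Nonempty (MulAut (Equiv.Perm (Fin n)) ≃* Equiv.Perm (Fin n))) :=
  aut_symmetricGroup_eq_inn_general n h6
end

section
/- Let G = S_n with n ≥ 2, n ≠ 6, let C_0 = {1} be the conjugacy class of the identity, and let r be a ramification of G with r_{C_0} = k > 0 and r_C = 0 for all other conjugacy classes C. Then the number N(G, r) of isomorphism classes of ramification systems with characters of G with ramification r equals k + 1. -/
/-!
Only the identity class carries characters, and its centralizer is all of `S_n`, whose only
characters are the trivial one and the sign. A system is therefore described, up to the choice
of representatives, by how many of its `k` characters are trivial. Isomorphisms only twist the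
characters by an automorphism, so this number is an invariant; conversely, as characters of
`S_n` are class functions, two systems with the same number are isomorphic through the identity
automorphism and any conjugations matching their representatives. Every number in `0, …, k`
occurs.
-/

/-- A ramification system with characters `RSC(G, r, χ⃗, u)` on a group `G`:
a ramification `r` assigning a nonnegative integer `r C` to each conjugacy class `C`
of `G`; a map `u` from conjugacy classes to `G` with `u C ∈ C`; and, for each
conjugacy class `C`, an `r C`-tuple of characters of the centralizer `Z_{u C}`
(one-dimensional representations, i.e. group homomorphisms `Z_{u C} → ℂˣ`).
For classes with `r C = 0` the tuple of characters is empty, so `χ` carries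
information exactly for the classes in `K_r(G) = {C : r C ≠ 0}`. -/
structure RSC (G : Type*) [Group G] where
  /-- the ramification -/
  r : ConjClasses G → ℕ
  /-- a choice of representative of each conjugacy class -/
  u : ConjClasses G → G
  hu : ∀ C : ConjClasses G, ConjClasses.mk (u C) = C
  /-- the tuple of characters of `Z_{u C}` attached to each conjugacy class `C` -/
  chi : ∀ C : ConjClasses G, Fin (r C) →
    (Subgroup.centralizer ({u C} : Set G) →* ℂˣ)

/-- Isomorphism of ramification systems with characters (over the same group `G`),
following the definition of the paper: `RSC(G, r, χ⃗, u) ≅ RSC(G, r', χ⃗', u')` if there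
are a group automorphism `φ` of `G`, for each conjugacy class `C` an element `h_C ∈ G`
with `φ(h_C u(C) h_C⁻¹) = u'(φ(C))`, and for each `C ∈ K_r(G)` a bijection
`φ_C : I_C(r) ≃ I_{φ(C)}(r')` such that
`χ'_{φ(C)}^{(φ_C(i))}(φ(h_C h h_C⁻¹)) = χ_C^{(i)}(h)` for all `h ∈ Z_{u(C)}` and
all `i`. -/
def RSC.Iso {G : Type*} [Group G] (A B : RSC G) : Prop :=
  ∃ φ : G ≃* G,
    ∀ C : ConjClasses G, ∃ h : G,
      φ (h * A.u C * h⁻¹) = B.u (ConjClasses.map (φ : G →* G) C) ∧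
      (A.r C ≠ 0 →
        ∃ e : Fin (A.r C) ≃ Fin (B.r (ConjClasses.map (φ : G →* G) C)),
          ∀ (i : Fin (A.r C)) (x : G)
            (hx : x ∈ Subgroup.centralizer ({A.u C} : Set G))
            (hx' : φ (h * x * h⁻¹) ∈
              Subgroup.centralizer ({B.u (ConjClasses.map (φ : G →* G) C)} : Set G)),
            B.chi (ConjClasses.map (φ : G →* G) C) (e i) ⟨φ (h * x * h⁻¹), hx'⟩ =
              A.chi C i ⟨x, hx⟩)

namespace Equiv.Perm

variable {α : Type*} [DecidableEq α] [Fintype α]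

variable (α) in
noncomputable def signC : Perm α →* ℂˣ :=
  (Units.map (Int.castRingHom ℂ).toMonoidHom).comp sign

theorem signC_apply_of_isSwap {σ : Perm α} (hσ : σ.IsSwap) : signC α σ = -1 := by
  ext
  simp [signC, hσ.sign_eq]

theorem signC_ne_one [Nontrivial α] : signC α ≠ 1 := by
  obtain ⟨a, b, hab⟩ := exists_pair_ne α
  intro h
  have := congrArg (fun χ : Perm α →* ℂˣ => (χ (swap a b) : ℂ)) h
  norm_num [signC_apply_of_isSwap ⟨a, b, hab, rfl⟩] at this

theorem eq_one_or_eq_signC (χ : Perm α →* ℂˣ) : χ = 1 ∨ χ = signC α := by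
  have hconj : ∀ σ τ : Perm α, σ.IsSwap → τ.IsSwap → χ σ = χ τ := by
    rintro _ _ ⟨a, b, hab, rfl⟩ ⟨c, d, hcd, rfl⟩
    exact isConj_iff_eq.mp (χ.map_isConj (isConj_swap hab hcd))
  have hsq : ∀ σ : Perm α, σ.IsSwap → χ σ = 1 ∨ χ σ = -1 := by
    rintro _ ⟨a, b, -, rfl⟩
    have h : (χ (swap a b) : ℂ) * χ (swap a b) = 1 := by
      rw [← Units.val_mul, ← map_mul, swap_mul_self, map_one, Units.val_one]
    rcases mul_self_eq_one_iff.mp h with h | h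
    · exact .inl (Units.ext h)
    · exact .inr (Units.ext h)
  by_cases h : ∃ τ : Perm α, τ.IsSwap ∧ χ τ = 1
  · obtain ⟨τ, hτ, hχτ⟩ := h
    exact .inl (MonoidHom.eq_of_eqOn_dense closure_isSwap fun σ hσ =>
      (hconj σ τ hσ hτ).trans hχτ)
  · push Not at h
    refine .inr (MonoidHom.eq_of_eqOn_dense closure_isSwap fun σ hσ => ?_)
    rw [signC_apply_of_isSwap hσ]
    exact (hsq σ hσ).resolve_left (h σ hσ)

theorem eq_of_eq_one_iff {χ ψ : Perm α →* ℂˣ} (h : χ = 1 ↔ ψ = 1) : χ = ψ := by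
  rcases eq_one_or_eq_signC χ with rfl | rfl <;>
    rcases eq_one_or_eq_signC ψ with rfl | rfl <;> simp_all

end Equiv.Perm

theorem Finite.exists_equiv_forall_iff {α β : Type*} [Finite α] [Finite β] {p : α → Prop}
    {q : β → Prop} (hcard : Nat.card α = Nat.card β)
    (hpq : Nat.card {a // p a} = Nat.card {b // q b}) :
    ∃ e : α ≃ β, ∀ a, p a ↔ q (e a) := by
  classical
  have hcompl : Nat.card {a // ¬ p a} = Nat.card {b // ¬ q b} := by
    have hα := Nat.card_congr (Equiv.sumCompl p)
    have hβ := Nat.card_congr (Equiv.sumCompl q)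
    rw [Nat.card_sum] at hα hβ
    omega
  obtain ⟨e₁⟩ := Finite.card_eq.mp hpq
  obtain ⟨e₂⟩ := Finite.card_eq.mp hcompl
  refine ⟨(Equiv.sumCompl p).symm.trans ((e₁.sumCongr e₂).trans (Equiv.sumCompl q)),
    fun a => ?_⟩
  by_cases ha : p a
  · simp [ha, (e₁ ⟨a, ha⟩).2]
  · simp [ha, (e₂ ⟨a, ha⟩).2]

namespace RSC

variable {G : Type*} [Group G] (A B : RSC G)

theorem u_one : A.u (ConjClasses.mk 1) = 1 :=
  isConj_one_left.mp (ConjClasses.mk_eq_mk_iff_isConj.mp (A.hu _))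

theorem centralizer_u_one : Subgroup.centralizer {A.u (ConjClasses.mk 1)} = ⊤ := by
  rw [A.u_one, Subgroup.centralizer_eq_top_iff_subset, Set.singleton_subset_iff]
  exact one_mem _

def charAtOne (i : Fin (A.r (ConjClasses.mk 1))) : G →* ℂˣ :=
  (A.chi _ i).comp
    ((MonoidHom.id G).codRestrict _ fun x => A.centralizer_u_one ▸ Subgroup.mem_top x)

noncomputable def trivCount : ℕ :=
  Nat.card {i : Fin (A.r (ConjClasses.mk 1)) // A.charAtOne i = 1}

theorem trivCount_le : A.trivCount ≤ A.r (ConjClasses.mk 1) :=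
  (Finite.card_subtype_le _).trans_eq (Nat.card_eq_fintype_card.trans (Fintype.card_fin _))

variable {A B}

theorem exists_charAtOne_eq_comp_of_iso (hAB : A.Iso B) (h0 : A.r (ConjClasses.mk 1) ≠ 0) :
    ∃ (e : Fin (A.r (ConjClasses.mk 1)) ≃ Fin (B.r (ConjClasses.mk 1))) (ψ : G ≃* G),
      ∀ i, A.charAtOne i = (B.charAtOne (e i)).comp ψ.toMonoidHom := by
  obtain ⟨φ, hφ⟩ := hAB
  obtain ⟨h, -, hchi⟩ := hφ (ConjClasses.mk 1)
  have hmap : ConjClasses.map (φ : G →* G) (ConjClasses.mk 1) = ConjClasses.mk 1 :=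
    congrArg ConjClasses.mk (map_one φ)
  rw [hmap] at hchi
  obtain ⟨e, he⟩ := hchi h0
  exact ⟨e, (MulAut.conj h).trans φ, fun i => MonoidHom.ext fun x => (he i x _ _).symm⟩

theorem trivCount_eq_of_iso (hAB : A.Iso B)
    (hr : A.r (ConjClasses.mk 1) = B.r (ConjClasses.mk 1)) : A.trivCount = B.trivCount := by
  rcases eq_or_ne (A.r (ConjClasses.mk 1)) 0 with h0 | h0
  · have hA := A.trivCount_le
    have hB := B.trivCount_le
    omega
  obtain ⟨e, ψ, he⟩ := exists_charAtOne_eq_comp_of_iso hAB h0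
  refine Nat.card_congr (e.subtypeEquiv fun i => ?_)
  rw [he i]
  exact MonoidHom.cancel_right (g₂ := 1) ψ.surjective

section Perm

open Equiv

variable {α : Type*} [DecidableEq α] [Fintype α]

theorem iso_of_trivCount_eq {A B : RSC (Perm α)} (hr : A.r = B.r)
    (hsupp : ∀ C, C ≠ ConjClasses.mk 1 → A.r C = 0) (hcount : A.trivCount = B.trivCount) :
    A.Iso B := by
  refine ⟨MulEquiv.refl _, fun C => ?_⟩
  have hmap : ConjClasses.map (MulEquiv.refl (Perm α) : Perm α →* Perm α) C = C := by
    obtain ⟨a, rfl⟩ := C.exists_rep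
    rfl
  rw [hmap]
  obtain ⟨h, hh⟩ :=
    isConj_iff.mp (ConjClasses.mk_eq_mk_iff_isConj.mp ((A.hu C).trans (B.hu C).symm))
  refine ⟨h, hh, fun hC => ?_⟩
  obtain rfl : C = ConjClasses.mk 1 := by_contra fun h => hC (hsupp C h)
  obtain ⟨e, he⟩ := Finite.exists_equiv_forall_iff (p := fun i => A.charAtOne i = 1)
    (q := fun j => B.charAtOne j = 1) (by simp [hr]) hcount
  refine ⟨e, fun i x hx hx' => ?_⟩
  show B.charAtOne (e i) (h * x * h⁻¹) = A.charAtOne i x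
  rw [Perm.eq_of_eq_one_iff (he i).symm, map_mul, map_mul, map_inv, mul_inv_cancel_comm]

noncomputable def trivSign (r : ConjClasses (Perm α) → ℕ) (m : ℕ) : RSC (Perm α) where
  r := r
  u C := C.exists_rep.choose
  hu C := C.exists_rep.choose_spec
  chi _ i := if (i : ℕ) < m then 1 else (Perm.signC α).comp (Subgroup.subtype _)

theorem trivSign_charAtOne {r : ConjClasses (Perm α) → ℕ} {m : ℕ}
    (i : Fin (r (ConjClasses.mk 1))) :
    (trivSign r m).charAtOne i = if (i : ℕ) < m then 1 else Perm.signC α := by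
  simp only [charAtOne, trivSign]
  split_ifs <;> rfl

theorem trivSign_charAtOne_eq_one_iff [Nontrivial α] {r : ConjClasses (Perm α) → ℕ} {m : ℕ}
    (i : Fin (r (ConjClasses.mk 1))) : (trivSign r m).charAtOne i = 1 ↔ (i : ℕ) < m := by
  rw [trivSign_charAtOne]
  split_ifs with hi <;> simp [hi, Perm.signC_ne_one]

theorem trivCount_trivSign [Nontrivial α] {r : ConjClasses (Perm α) → ℕ} {m : ℕ}
    (hm : m ≤ r (ConjClasses.mk 1)) : (trivSign r m).trivCount = m := by
  refine (Nat.card_congr (Equiv.subtypeEquivRight trivSign_charAtOne_eq_one_iff)).trans ?_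
  rw [Nat.card_eq_fintype_card, Fintype.card_subtype, Fin.card_filter_val_lt]
  exact min_eq_right hm

end Perm

end RSC

theorem card_rsc_classes_identity_class_general (n k : ℕ) (hn : 2 ≤ n)
    (r : ConjClasses (Equiv.Perm (Fin n)) → ℕ)
    (hr : ∀ C : ConjClasses (Equiv.Perm (Fin n)),
      r C = if C = ConjClasses.mk (1 : Equiv.Perm (Fin n)) then k else 0) :
    Nat.card
        (Quot fun A B : {A : RSC (Equiv.Perm (Fin n)) // A.r = r} =>
          RSC.Iso A.1 B.1) = k + 1 := by
  have : Nontrivial (Fin n) := Fin.nontrivial_iff_two_le.mpr hn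
  have hr1 : r (ConjClasses.mk 1) = k := by simp [hr]
  have hsupp : ∀ C, C ≠ ConjClasses.mk 1 → r C = 0 := fun C hC => by simp [hr, hC]
  let N (A : {A : RSC (Equiv.Perm (Fin n)) // A.r = r}) : Fin (k + 1) :=
    ⟨A.1.trivCount, Nat.lt_succ_of_le (A.1.trivCount_le.trans_eq (by rw [A.2, hr1]))⟩
  have hN : Function.Surjective N := fun m =>
    ⟨⟨RSC.trivSign r m, rfl⟩,
      Fin.ext (RSC.trivCount_trivSign (by rw [hr1]; exact Nat.le_of_lt_succ m.2))⟩
  have hiso (A B) : A.1.Iso B.1 ↔ Setoid.ker N A B :=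
    ⟨fun h => Fin.ext (RSC.trivCount_eq_of_iso h (by rw [A.2, B.2])),
      fun h => RSC.iso_of_trivCount_eq (A.2.trans B.2.symm)
        (fun C hC => by rw [A.2]; exact hsupp C hC) (congrArg Fin.val (Setoid.ker_def.mp h))⟩
  rw [Nat.card_congr ((Quot.congrRight hiso).trans (Setoid.quotientKerEquivOfSurjective N hN)),
    Nat.card_eq_fintype_card, Fintype.card_fin]

/-- Let `G = S_n` with `n ≥ 2`, `n ≠ 6`, let `C₀ = {1}` be the conjugacy class of the
identity, and let `r` be the ramification with `r_{C₀} = k > 0` and `r_C = 0` for all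
other conjugacy classes `C`.  Then the number `N(G, r)` of isomorphism classes of
ramification systems with characters of `G` with ramification `r` equals `k + 1`. -/
theorem card_rsc_classes_identity_class (n k : ℕ) (hn : 2 ≤ n) (h6 : n ≠ 6)
    (hk : 0 < k)
    (r : ConjClasses (Equiv.Perm (Fin n)) → ℕ)
    (hr : ∀ C : ConjClasses (Equiv.Perm (Fin n)),
      r C = if C = ConjClasses.mk (1 : Equiv.Perm (Fin n)) then k else 0) :
    Nat.card
        (Quot fun A B : {A : RSC (Equiv.Perm (Fin n)) // A.r = r} =>
          RSC.Iso A.1 B.1) = k + 1 :=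
  card_rsc_classes_identity_class_general n k hn r hr
end
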